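/- arXiv:1211.3003 — 3 statements merged into one kernel-verified Lean document; each statement's English description precedes it below -/
import Mathlib

section
/- Let ν be a symmetric probability measure on ℤ such that there is a constant C_1 with ν(n) ≤ C_1 ν(m) for all 0 ≤ m ≤ n. Let G be a countable group with a distinguished element s, and define the Dirichlet form E_{s,ν}(f,f) = (1/2) Σ_{x∈G, z∈ℤ} |f(xs^z) − f(x)|² ν(z) and the truncated second moment G_ν(m) = Σ_{|n|≤m} n² ν(n). Then there is a constant C_ν depending only on C_1 such that for any finitely supported function f on G and any y ∈ ℤ, Σ_{x∈G} |f(xs^y) − f(x)|² ≤ C_ν · (y² / G_ν(|y|)) · E_{s,ν}(f,f). -/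
/-- The Dirichlet form `E_{s,ν}(f,f) = (1/2) Σ_{x∈G, z∈ℤ} |f(xs^z) − f(x)|² ν(z)`. -/
noncomputable def dirichletForm {G : Type*} [Group G] (s : G) (ν : ℤ → ℝ) (f : G → ℝ) : ℝ :=
  (1 / 2) * ∑' p : G × ℤ, (f (p.1 * s ^ p.2) - f p.1) ^ 2 * ν p.2

/-- The truncated second moment `G_ν(m) = Σ_{|n| ≤ m} n² ν(n)`. -/
noncomputable def truncMoment (ν : ℤ → ℝ) (m : ℤ) : ℝ :=
  ∑' n : ℤ, if |n| ≤ m then (n : ℝ) ^ 2 * ν n else 0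

/-!
Write `h n = Σₓ (f (x sⁿ) - f x)²`. Telescoping and Cauchy–Schwarz give
`h (k z + r) ≤ 2 k² h z + 2 h r`. For `1 ≤ z ≤ Y` divide `Y = k z + r` with `r < z`; since
`k z ≤ Y` and `ν z ≤ C₁ ν r`, the weight `z² ν z` turns this into
`z² ν z h Y ≤ 2 Y² h z ν z + 2 C₁ Y² k⁻² h r ν r`. Summing over `z`, the map `z ↦ (k, r)` is
injective, so the second terms add up to at most `Σ_k k⁻² · Σ_r h r ν r ≤ 2 Σ_r h r ν r`, and
`Σ_r h r ν r ≤ 2 E_{s,ν}(f,f)`. Symmetry of `ν` gives `G_ν(Y) = 2 Σ_{1 ≤ z ≤ Y} z² ν z`.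
-/

open Finset

section ShiftEnergy

variable {G : Type*} [Group G] {f : G → ℝ}

noncomputable def shiftEnergy (f : G → ℝ) (g : G) : ℝ := ∑' x, (f (x * g) - f x) ^ 2

lemma shiftEnergy_nonneg (f : G → ℝ) (g : G) : 0 ≤ shiftEnergy f g :=
  tsum_nonneg fun _ => sq_nonneg _

lemma summable_sq_sub_comp_mul_right (hf : (Function.support f).Finite) (a b : G) :
    Summable fun x => (f (x * a) - f (x * b)) ^ 2 := by
  refine summable_of_hasFiniteSupport <|
    ((hf.preimage (mul_left_injective a).injOn).union
      (hf.preimage (mul_left_injective b).injOn)).subset fun x hx => ?_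
  by_contra h
  simp_all

lemma summable_shiftEnergy (hf : (Function.support f).Finite) (a : G) :
    Summable fun x => (f (x * a) - f x) ^ 2 := by
  simpa using summable_sq_sub_comp_mul_right hf a 1

lemma summable_sq_comp_mul_right (hf : (Function.support f).Finite) (a : G) :
    Summable fun x => f (x * a) ^ 2 :=
  summable_of_hasFiniteSupport <|
    (hf.preimage (mul_left_injective a).injOn).subset fun x hx => by simp_all

lemma tsum_comp_mul_right (φ : G → ℝ) (a : G) : ∑' x, φ (x * a) = ∑' x, φ x :=
  (Equiv.mulRight a).tsum_eq φ

lemma tsum_sq_sub_mul_mul (f : G → ℝ) (a b : G) :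
    ∑' x, (f (x * a * b) - f (x * a)) ^ 2 = shiftEnergy f b :=
  tsum_comp_mul_right (fun x => (f (x * b) - f x) ^ 2) a

lemma shiftEnergy_inv (f : G → ℝ) (a : G) : shiftEnergy f a⁻¹ = shiftEnergy f a := by
  rw [← tsum_sq_sub_mul_mul f a a⁻¹, shiftEnergy]
  exact tsum_congr fun x => by rw [mul_inv_cancel_right, ← neg_sub, neg_sq]

lemma shiftEnergy_le (hf : (Function.support f).Finite) (a : G) :
    shiftEnergy f a ≤ 4 * ∑' x, f x ^ 2 := by
  have hfa := summable_sq_comp_mul_right hf a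
  have hf1 : Summable fun x => f x ^ 2 := by simpa using summable_sq_comp_mul_right hf 1
  calc shiftEnergy f a ≤ ∑' x, (2 * f (x * a) ^ 2 + 2 * f x ^ 2) :=
        (summable_shiftEnergy hf a).tsum_le_tsum
          (fun x => by nlinarith [sq_nonneg (f (x * a) + f x)])
          ((hfa.mul_left 2).add (hf1.mul_left 2))
    _ = 2 * ∑' x, f (x * a) ^ 2 + 2 * ∑' x, f x ^ 2 := by
        rw [(hfa.mul_left 2).tsum_add (hf1.mul_left 2), tsum_mul_left, tsum_mul_left]
    _ = 4 * ∑' x, f x ^ 2 := by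
        rw [tsum_comp_mul_right (fun x => f x ^ 2)]; ring

lemma shiftEnergy_mul_le (hf : (Function.support f).Finite) (a b : G) :
    shiftEnergy f (a * b) ≤ 2 * shiftEnergy f a + 2 * shiftEnergy f b := by
  have hab : Summable fun x => (f (x * a * b) - f (x * a)) ^ 2 := by
    simpa [mul_assoc] using summable_sq_sub_comp_mul_right hf (a * b) a
  have ha := summable_shiftEnergy hf a
  calc shiftEnergy f (a * b)
      ≤ ∑' x, (2 * (f (x * a * b) - f (x * a)) ^ 2 + 2 * (f (x * a) - f x) ^ 2) := by
        refine (summable_shiftEnergy hf (a * b)).tsum_le_tsum (fun x => ?_)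
          ((hab.mul_left 2).add (ha.mul_left 2))
        rw [← mul_assoc]
        nlinarith [sq_nonneg (f (x * a * b) - 2 * f (x * a) + f x)]
    _ = 2 * shiftEnergy f b + 2 * shiftEnergy f a := by
        rw [(hab.mul_left 2).tsum_add (ha.mul_left 2), tsum_mul_left, tsum_mul_left,
          tsum_sq_sub_mul_mul]
        rfl
    _ = _ := by ring

lemma shiftEnergy_pow_le (hf : (Function.support f).Finite) (a : G) (k : ℕ) :
    shiftEnergy f (a ^ k) ≤ k ^ 2 * shiftEnergy f a := by
  have hstep : ∀ j : ℕ, Summable fun x => (f (x * a ^ j * a) - f (x * a ^ j)) ^ 2 := fun j => by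
    simpa [mul_assoc] using summable_sq_sub_comp_mul_right hf (a ^ j * a) (a ^ j)
  have hpt : ∀ x, (f (x * a ^ k) - f x) ^ 2 ≤
      k * ∑ j ∈ range k, (f (x * a ^ j * a) - f (x * a ^ j)) ^ 2 := fun x => by
    have htel := Finset.sum_range_sub (fun j => f (x * a ^ j)) k
    simp only [pow_succ, ← mul_assoc, pow_zero, mul_one] at htel
    rw [← htel]
    exact sq_sum_le_card_mul_sum_sq.trans_eq (by rw [card_range])
  calc shiftEnergy f (a ^ k)
      ≤ ∑' x, k * ∑ j ∈ range k, (f (x * a ^ j * a) - f (x * a ^ j)) ^ 2 :=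
        (summable_shiftEnergy hf _).tsum_le_tsum hpt
          ((summable_sum fun j _ => hstep j).mul_left _)
    _ = k ^ 2 * shiftEnergy f a := by
        rw [tsum_mul_left, Summable.tsum_finsetSum fun j _ => hstep j]
        simp only [tsum_sq_sub_mul_mul, sum_const, card_range, nsmul_eq_mul]
        ring

lemma shiftEnergy_pow_mul_le (hf : (Function.support f).Finite) (a b : G) (k : ℕ) :
    shiftEnergy f (a ^ k * b) ≤ 2 * k ^ 2 * shiftEnergy f a + 2 * shiftEnergy f b := by
  have := shiftEnergy_pow_le hf a k
  linarith [shiftEnergy_mul_le hf (a ^ k) b]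

lemma shiftEnergy_zpow_eq_pow_natAbs (f : G → ℝ) (s : G) (y : ℤ) :
    shiftEnergy f (s ^ y) = shiftEnergy f (s ^ y.natAbs) := by
  obtain ⟨n, rfl | rfl⟩ := Int.eq_nat_or_neg y <;> simp [shiftEnergy_inv]

lemma summable_shiftEnergy_zpow_mul (hf : (Function.support f).Finite) (s : G) {ν : ℤ → ℝ}
    (hν : ∀ n, 0 ≤ ν n) (hνs : Summable ν) : Summable fun z => shiftEnergy f (s ^ z) * ν z :=
  (hνs.mul_left (4 * ∑' x, f x ^ 2)).of_nonneg_of_le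
    (fun z => mul_nonneg (shiftEnergy_nonneg f _) (hν z))
    fun z => mul_le_mul_of_nonneg_right (shiftEnergy_le hf _) (hν z)

lemma dirichletForm_eq_tsum (hf : (Function.support f).Finite) (s : G) {ν : ℤ → ℝ}
    (hν : ∀ n, 0 ≤ ν n) (hνs : Summable ν) :
    dirichletForm s ν f = 1 / 2 * ∑' z, shiftEnergy f (s ^ z) * ν z := by
  set F : ℤ × G → ℝ := fun q => (f (q.2 * s ^ q.1) - f q.2) ^ 2 * ν q.1
  have hF : Summable F := by
    refine (summable_prod_of_nonneg fun q => mul_nonneg (sq_nonneg _) (hν q.1)).2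
      ⟨fun z => (summable_shiftEnergy hf (s ^ z)).mul_right (ν z), ?_⟩
    exact (summable_shiftEnergy_zpow_mul hf s hν hνs).congr fun z => tsum_mul_right.symm
  rw [dirichletForm, ← (Equiv.prodComm ℤ G).tsum_eq]
  change 1 / 2 * ∑' q, F q = _
  rw [hF.tsum_prod]
  exact congrArg _ <| tsum_congr fun z => by rw [shiftEnergy, ← tsum_mul_right]

end ShiftEnergy

lemma truncMoment_natCast {ν : ℤ → ℝ} (hsym : ∀ n, ν (-n) = ν n) (Y : ℕ) :
    truncMoment ν Y = 2 * ∑ z ∈ Icc 1 Y, (z : ℝ) ^ 2 * ν z := by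
  set g : ℤ → ℝ := fun n => if |n| ≤ Y then (n : ℝ) ^ 2 * ν n else 0
  have hg : Summable g := summable_of_ne_finset_zero (s := Icc (-(Y : ℤ)) Y) fun n hn => by
    simp only [mem_Icc, not_and_or, not_le] at hn
    simp only [g, if_neg (show ¬|n| ≤ Y by rw [abs_le]; omega)]
  have heven : ∀ n : ℕ, g n + g (-n) = 2 * g n := fun n => by
    simp only [g, abs_neg, Int.cast_neg, neg_sq, hsym]; ring
  have hnat : ∑' n : ℕ, g n = ∑ z ∈ Icc 1 Y, (z : ℝ) ^ 2 * ν z := by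
    rw [tsum_eq_sum (s := Icc 1 Y) fun n hn => ?_]
    · exact sum_congr rfl fun z hz => by
        simp only [g, if_pos (show |(z : ℤ)| ≤ Y by rw [mem_Icc] at hz; rw [abs_le]; omega)]
        norm_cast
    · rw [mem_Icc] at hn
      rcases Nat.eq_zero_or_pos n with rfl | hpos
      · simp [g]
      · simp only [g, if_neg (show ¬|(n : ℤ)| ≤ Y by rw [abs_le]; omega)]
  have hsum := tsum_nat_add_neg hg
  have hg0 : g 0 = 0 := by simp [g]
  simp only [heven] at hsum
  rw [tsum_mul_left, hnat, hg0, add_zero] at hsum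
  exact hsum.symm

lemma sum_inv_sq_Icc_le_two (Y : ℕ) : ∑ k ∈ Icc 1 Y, ((k : ℝ) ^ 2)⁻¹ ≤ 2 := by
  have hIcc : Icc 1 Y = Ioo 0 (Y + 1) := by ext; simp only [mem_Icc, mem_Ioo]; omega
  simpa [hIcc] using sum_Ioo_inv_sq_le (α := ℝ) 0 (Y + 1)

lemma sum_comp_div_mul_comp_mod_le {φ ψ : ℕ → ℝ} (hφ : ∀ k, 0 ≤ φ k) (hψ : ∀ r, 0 ≤ ψ r)
    (Y : ℕ) :
    ∑ z ∈ Icc 1 Y, φ (Y / z) * ψ (Y % z) ≤ (∑ k ∈ Icc 1 Y, φ k) * ∑ r ∈ range Y, ψ r := by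
  have hinj : Set.InjOn (fun z => (Y / z, Y % z)) (Icc 1 Y) := by
    intro z₁ hz₁ z₂ hz₂ h
    simp only [coe_Icc, Set.mem_Icc, Prod.mk.injEq] at hz₁ hz₂ h
    have h₁ := Nat.div_add_mod Y z₁
    have h₂ := Nat.div_add_mod Y z₂
    have hk : 0 < Y / z₁ := Nat.div_pos hz₁.2 hz₁.1
    rw [h.1, h.2] at h₁
    exact Nat.eq_of_mul_eq_mul_right (h.1 ▸ hk) (by linarith)
  have hmaps : ∀ z ∈ Icc 1 Y, (Y / z, Y % z) ∈ Icc 1 Y ×ˢ range Y := by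
    intro z hz
    simp only [mem_Icc, mem_product, mem_range] at hz ⊢
    exact ⟨⟨Nat.div_pos hz.2 hz.1, Nat.div_le_self Y z⟩,
      (Nat.mod_lt Y hz.1).trans_le hz.2⟩
  calc ∑ z ∈ Icc 1 Y, φ (Y / z) * ψ (Y % z)
      = ∑ p ∈ (Icc 1 Y).image fun z => (Y / z, Y % z), φ p.1 * ψ p.2 :=
        (sum_image (f := fun p => φ p.1 * ψ p.2) hinj).symm
    _ ≤ ∑ p ∈ Icc 1 Y ×ˢ range Y, φ p.1 * ψ p.2 :=
        sum_le_sum_of_subset_of_nonneg (image_subset_iff.2 hmaps)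
          fun p _ _ => mul_nonneg (hφ _) (hψ _)
    _ = _ := by rw [sum_mul_sum, sum_product]

section Chain

variable {h ν : ℕ → ℝ} {A : ℝ}

lemma sq_mul_mul_le_of_chain (hh : ∀ n, 0 ≤ h n) (hν : ∀ n, 0 ≤ ν n)
    (chain : ∀ k z r, h (k * z + r) ≤ 2 * k ^ 2 * h z + 2 * h r)
    (decr : ∀ r z, r ≤ z → ν z ≤ A * ν r) {Y z : ℕ} (hz : z ∈ Icc 1 Y) :
    (z : ℝ) ^ 2 * ν z * h Y ≤
      2 * Y ^ 2 * (h z * ν z) +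
        2 * A * Y ^ 2 * ((((Y / z : ℕ) : ℝ) ^ 2)⁻¹ * (h (Y % z) * ν (Y % z))) := by
  rw [mem_Icc] at hz
  set k := Y / z
  set r := Y % z
  have hY : k * z + r = Y := Nat.div_add_mod' Y z
  have hk : (0 : ℝ) < k := by exact_mod_cast Nat.div_pos hz.2 hz.1
  have hkz : ((k : ℝ) * z) ^ 2 ≤ (Y : ℝ) ^ 2 := by
    gcongr; exact_mod_cast hY ▸ Nat.le_add_right (k * z) r
  have hzk : (z : ℝ) ^ 2 ≤ Y ^ 2 * ((k : ℝ) ^ 2)⁻¹ := by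
    rw [le_mul_inv_iff₀ (by positivity)]; linarith
  have hνz : ν z ≤ A * ν r := decr r z (Nat.mod_lt Y hz.1).le
  calc (z : ℝ) ^ 2 * ν z * h Y
      ≤ (z : ℝ) ^ 2 * ν z * (2 * k ^ 2 * h z + 2 * h r) := by
        gcongr
        · exact mul_nonneg (sq_nonneg _) (hν z)
        · exact hY ▸ chain k z r
    _ = 2 * ((k : ℝ) * z) ^ 2 * (h z * ν z) + 2 * z ^ 2 * (ν z * h r) := by ring
    _ ≤ 2 * Y ^ 2 * (h z * ν z) + 2 * (Y ^ 2 * ((k : ℝ) ^ 2)⁻¹) * (A * ν r * h r) := by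
        gcongr
        · exact mul_nonneg (hh z) (hν z)
        · exact mul_nonneg (hν z) (hh r)
        · exact hh r
    _ = _ := by ring

lemma sum_sq_mul_mul_le_of_chain (hh : ∀ n, 0 ≤ h n) (hν : ∀ n, 0 ≤ ν n) (hA : 0 ≤ A)
    (chain : ∀ k z r, h (k * z + r) ≤ 2 * k ^ 2 * h z + 2 * h r)
    (decr : ∀ r z, r ≤ z → ν z ≤ A * ν r) (Y : ℕ) :
    (∑ z ∈ Icc 1 Y, (z : ℝ) ^ 2 * ν z) * h Y ≤
      2 * (1 + 2 * A) * Y ^ 2 * ∑ r ∈ range (Y + 1), h r * ν r := by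
  set S := ∑ r ∈ range (Y + 1), h r * ν r
  have hW : ∀ r, 0 ≤ h r * ν r := fun r => mul_nonneg (hh r) (hν r)
  have hIcc : ∑ z ∈ Icc 1 Y, h z * ν z ≤ S :=
    sum_le_sum_of_subset_of_nonneg (fun z hz => by simp at hz ⊢; omega) fun z _ _ => hW z
  have hrem : ∑ z ∈ Icc 1 Y, (((Y / z : ℕ) : ℝ) ^ 2)⁻¹ * (h (Y % z) * ν (Y % z)) ≤ 2 * S :=
    calc _ ≤ (∑ k ∈ Icc 1 Y, ((k : ℝ) ^ 2)⁻¹) * ∑ r ∈ range Y, h r * ν r :=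
          sum_comp_div_mul_comp_mod_le (fun k => by positivity) hW Y
      _ ≤ 2 * S := by
          gcongr
          · exact sum_nonneg fun r _ => hW r
          · exact sum_inv_sq_Icc_le_two Y
          · exact sum_le_sum_of_subset_of_nonneg (range_mono (Nat.le_succ Y))
              fun r _ _ => hW r
  calc (∑ z ∈ Icc 1 Y, (z : ℝ) ^ 2 * ν z) * h Y
      ≤ ∑ z ∈ Icc 1 Y, (2 * Y ^ 2 * (h z * ν z) +
          2 * A * Y ^ 2 * ((((Y / z : ℕ) : ℝ) ^ 2)⁻¹ * (h (Y % z) * ν (Y % z)))) := by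
        rw [sum_mul]
        exact sum_le_sum fun z hz => sq_mul_mul_le_of_chain hh hν chain decr hz
    _ = 2 * Y ^ 2 * ∑ z ∈ Icc 1 Y, h z * ν z +
          2 * A * Y ^ 2 * ∑ z ∈ Icc 1 Y, (((Y / z : ℕ) : ℝ) ^ 2)⁻¹ * (h (Y % z) * ν (Y % z)) := by
        rw [sum_add_distrib, mul_sum, mul_sum]
    _ ≤ 2 * Y ^ 2 * S + 2 * A * Y ^ 2 * (2 * S) := by gcongr
    _ = _ := by ring

end Chain

/-- one-dimensional pseudo-Poincaré inequality.
Let `ν` be a symmetric probability measure on `ℤ` which is essentially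
decreasing: `ν n ≤ C₁ ν m` for `0 ≤ m ≤ n`.  Let `G` be a countable group with a
distinguished element `s`.  Then there is a constant `C_ν` (depending only on
`C₁`) such that for every finitely supported `f : G → ℝ` and every `y ∈ ℤ`,
`Σ_x |f(xs^y) − f(x)|² · G_ν(|y|) ≤ C_ν · y² · E_{s,ν}(f,f)`
(the inequality `Σ_x |f(xs^y)−f(x)|² ≤ C_ν (y²/G_ν(|y|)) E_{s,ν}(f,f)` in
cleared-denominator form). -/
theorem statement2 (C₁ : ℝ) :
    ∃ Cν : ℝ, 0 < Cν ∧
      ∀ {G : Type} [Group G] [Countable G] (s : G) (ν : ℤ → ℝ),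
        (∀ n, 0 ≤ ν n) →
        (∀ n, ν (-n) = ν n) →
        (∑' n : ℤ, ν n) = 1 →
        (∀ m n : ℤ, 0 ≤ m → m ≤ n → ν n ≤ C₁ * ν m) →
        ∀ f : G → ℝ, (Function.support f).Finite →
          ∀ y : ℤ,
            (∑' x : G, (f (x * s ^ y) - f x) ^ 2) * truncMoment ν |y| ≤
              Cν * (y : ℝ) ^ 2 * dirichletForm s ν f := by
  refine ⟨8 * (1 + 2 * max C₁ 0), by positivity, ?_⟩
  intro G _ _ s ν hν hsym hsum hdec f hf y
  set A := max C₁ 0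
  set Y := y.natAbs
  have hνs : Summable ν := by
    by_contra h
    rw [tsum_eq_zero_of_not_summable h] at hsum
    exact zero_ne_one hsum
  have hmain := sum_sq_mul_mul_le_of_chain (h := fun n => shiftEnergy f (s ^ n))
    (ν := fun n => ν n) (fun n => shiftEnergy_nonneg f _) (fun n => hν n) (le_max_right C₁ 0)
    (fun k z r => by simpa [pow_add, pow_mul'] using shiftEnergy_pow_mul_le hf (s ^ z) (s ^ r) k)
    (fun r z hrz => (hdec r z (Int.natCast_nonneg r) (by exact_mod_cast hrz)).trans
      (mul_le_mul_of_nonneg_right (le_max_left C₁ 0) (hν r))) Y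
  have hW : ∑ r ∈ range (Y + 1), shiftEnergy f (s ^ r) * ν r ≤ 2 * dirichletForm s ν f := by
    rw [dirichletForm_eq_tsum hf s hν hνs]
    calc ∑ r ∈ range (Y + 1), shiftEnergy f (s ^ r) * ν r
        = ∑ z ∈ (range (Y + 1)).map Nat.castEmbedding, shiftEnergy f (s ^ z) * ν z := by
          simp [sum_map]
      _ ≤ ∑' z, shiftEnergy f (s ^ z) * ν z :=
          (summable_shiftEnergy_zpow_mul hf s hν hνs).sum_le_tsum _
            fun z _ => mul_nonneg (shiftEnergy_nonneg f _) (hν z)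
      _ = _ := by ring
  have hy : (y : ℝ) ^ 2 = (Y : ℝ) ^ 2 := by simp [Y, Nat.cast_natAbs, sq_abs]
  change shiftEnergy f (s ^ y) * _ ≤ _
  rw [shiftEnergy_zpow_eq_pow_natAbs, ← Int.natCast_natAbs, truncMoment_natCast hsym, hy]
  calc shiftEnergy f (s ^ Y) * (2 * ∑ z ∈ Icc 1 Y, (z : ℝ) ^ 2 * ν z)
      = 2 * ((∑ z ∈ Icc 1 Y, (z : ℝ) ^ 2 * ν z) * shiftEnergy f (s ^ Y)) := by ring
    _ ≤ 2 * (2 * (1 + 2 * A) * Y ^ 2 * (2 * dirichletForm s ν f)) :=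
        mul_le_mul_of_nonneg_left (hmain.trans (by gcongr)) zero_le_two
    _ = _ := by ring
end

section
/- Let G be a nilpotent group generated by a k-tuple S with weight system 𝔴 and associated filtration G^𝔴_j. Suppose c is a formal commutator over S whose image in G projects to a non-torsion (free) element of G^𝔴_j/G^𝔴_{j+1}, where w(c) = w̄_j. Then every letter s appearing in the build-word of c satisfies w(s) = w̄_{j_𝔴(s)}, where j_𝔴(s) = max{j : ∃ u ∈ ℕ, s^u ∈ G^𝔴_j}; that is, c only uses letters in the core of (𝔴,S). -/
/-!
The weight subgroups `F t = weightSubgroup S w t` form a strongly central filtration: each `F t`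
is normal, because conjugating a formal commutator by a letter multiplies it by a heavier formal
commutator, and `⁅F a, F b⁆ ≤ F (a + b)`. Hence commutators are bilinear modulo the next layer:
replacing every letter `S i` of `c` by `S i ^ N i` turns the image of `c` into its
`(∏ N)`-th power modulo `F (w(c) + δ)`, with `δ` the least letter weight.

If a letter `S i` of `c` had a power `S i ^ u` (`u > 0`) in some `F t` with `t > w i`, then
replacing `S i` by `S i ^ u` would put `c` in a layer strictly above `w(c)`. So would a positive
power of `c`, which contradicts freeness. Hence no power of `S i` lies deeper than `w i`, and
`j_𝔴(S i)` is the index of `w i`.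
-/

/-- Formal commutators over a `k`-letter alphabet with signs. -/
inductive FC (k : ℕ) : Type
  | gen : Fin k → Bool → FC k
  | comm : FC k → FC k → FC k
  deriving DecidableEq

open scoped commutatorElement

namespace FC

variable {k : ℕ}

/-- The weight of a formal commutator: the sum of the weights of its letters. -/
def weight (w : Fin k → ℝ) : FC k → ℝ
  | gen i _ => w i
  | comm a b => weight w a + weight w b

/-- The image of a formal commutator in a group `G`. -/
def image {G : Type*} [Group G] (S : Fin k → G) : FC k → G
  | gen i b => if b then S i else (S i)⁻¹
  | comm a b => ⁅image S a, image S b⁆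

/-- The list of letters (generator indices) in the build-word of a commutator. -/
def letters : FC k → List (Fin k)
  | gen i _ => [i]
  | comm a b => letters a ++ letters b

end FC

/-- The subgroup generated by the images of all formal commutators of weight
at least the threshold `t`. -/
def weightSubgroup {k : ℕ} {G : Type*} [Group G] (S : Fin k → G) (w : Fin k → ℝ)
    (t : ℝ) : Subgroup G :=
  Subgroup.closure { g | ∃ c : FC k, t ≤ FC.weight w c ∧ FC.image S c = g }

/-- `j_𝔴(s) = max{j : ∃ u ∈ ℕ, u > 0, s^u ∈ G^𝔴_j}`. -/
noncomputable def jIndex {k : ℕ} {G : Type*} [Group G] (S : Fin k → G) (w : Fin k → ℝ)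
    (wbar : ℕ → ℝ) (s : G) : ℕ :=
  sSup { j : ℕ | ∃ u : ℕ, 0 < u ∧ s ^ u ∈ weightSubgroup S w (wbar j) }

section CommutatorCalculus

variable {G : Type*} [Group G]

theorem commutatorElement_pow_left_of_commute {x y : G} (h : Commute x ⁅x, y⁆) (m : ℕ) :
    ⁅x ^ m, y⁆ = ⁅x, y⁆ ^ m := by
  induction m with
  | zero => simp
  | succ m ih =>
    rw [pow_succ', commutatorElement_mul_left_eq_conj_mul, ih, (h.pow_right m).mul_inv_cancel,
      pow_succ]

theorem commutatorElement_pow_right_of_commute {x y : G} (h : Commute y ⁅x, y⁆) (n : ℕ) :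
    ⁅x, y ^ n⁆ = ⁅x, y⁆ ^ n := by
  rw [← commutatorElement_inv, commutatorElement_pow_left_of_commute, ← inv_pow,
    commutatorElement_inv]
  rwa [← commutatorElement_inv, Commute.inv_right_iff]

theorem commutatorElement_pow_pow_of_commute {x y : G} (hx : Commute x ⁅x, y⁆)
    (hy : Commute y ⁅x, y⁆) (m n : ℕ) : ⁅x ^ m, y ^ n⁆ = ⁅x, y⁆ ^ (m * n) := by
  have hxm : ⁅x ^ m, y⁆ = ⁅x, y⁆ ^ m := commutatorElement_pow_left_of_commute hx m
  rw [commutatorElement_pow_right_of_commute (hxm ▸ hy.pow_right m), hxm, pow_mul]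

theorem commutatorElement_mul_mul_of_commute {a b e f : G} (he : Commute e (b * f))
    (hf : Commute f a) : ⁅a * e, b * f⁆ = ⁅a, b⁆ := by
  calc ⁅a * e, b * f⁆ = a * (e * (b * f) * e⁻¹) * a⁻¹ * (f⁻¹ * b⁻¹) := by
        rw [commutatorElement_def]; group
    _ = a * b * (f * a⁻¹ * f⁻¹) * b⁻¹ := by rw [he.mul_inv_cancel]; group
    _ = ⁅a, b⁆ := by rw [hf.inv_right.mul_inv_cancel, commutatorElement_def]

theorem QuotientGroup.commute_mk_iff {N : Subgroup G} [N.Normal] {x y : G} :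
    Commute (x : G ⧸ N) y ↔ ⁅x, y⁆ ∈ N := by
  rw [← commutatorElement_eq_one_iff_commute, ← QuotientGroup.eq_one_iff]
  rfl

theorem Subgroup.commutator_closure_le {N : Subgroup G} [N.Normal] {s t : Set G}
    (h : ∀ x ∈ s, ∀ y ∈ t, ⁅x, y⁆ ∈ N) : ⁅Subgroup.closure s, Subgroup.closure t⁆ ≤ N := by
  rw [← QuotientGroup.ker_mk' N, ← Subgroup.map_eq_bot_iff, Subgroup.map_commutator,
    Subgroup.commutator_eq_bot_iff_le_centralizer, MonoidHom.map_closure, MonoidHom.map_closure,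
    Subgroup.centralizer_closure, Subgroup.closure_le]
  rintro _ ⟨x, hx, rfl⟩ _ ⟨y, hy, rfl⟩
  exact (QuotientGroup.commute_mk_iff.2 (h x hx y hy)).symm.eq

end CommutatorCalculus

structure IsStronglyCentralFiltration {G : Type*} [Group G] (F : ℝ → Subgroup G) : Prop where
  antitone : Antitone F
  normal : ∀ t, (F t).Normal
  commutator_le : ∀ a b, ⁅F a, F b⁆ ≤ F (a + b)

namespace IsStronglyCentralFiltration

variable {G : Type*} [Group G] {F : ℝ → Subgroup G} (hF : IsStronglyCentralFiltration F)
include hF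

theorem commutator_mem {a b : ℝ} {x y : G} (hx : x ∈ F a) (hy : y ∈ F b) : ⁅x, y⁆ ∈ F (a + b) :=
  hF.commutator_le a b (Subgroup.commutator_mem_commutator hx hy)

theorem commute_mk {r a b : ℝ} [(F r).Normal] (hab : r ≤ a + b) {x y : G} (hx : x ∈ F a)
    (hy : y ∈ F b) : Commute (x : G ⧸ F r) y :=
  QuotientGroup.commute_mk_iff.2 (hF.antitone hab (hF.commutator_mem hx hy))

theorem commutator_pow_congr {p q δ : ℝ} (hδ : 0 ≤ δ) (hδp : δ ≤ p) (hδq : δ ≤ q)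
    {x y x' y' : G} {m n : ℕ} (hx : x ∈ F p) (hy : y ∈ F q)
    (hx' : (x ^ m)⁻¹ * x' ∈ F (p + δ)) (hy' : (y ^ n)⁻¹ * y' ∈ F (q + δ)) :
    (⁅x, y⁆ ^ (m * n))⁻¹ * ⁅x', y'⁆ ∈ F (p + q + δ) := by
  have := hF.normal (p + q + δ)
  obtain ⟨e, he, rfl⟩ : ∃ e ∈ F (p + δ), x' = x ^ m * e := ⟨_, hx', (mul_inv_cancel_left _ _).symm⟩
  obtain ⟨f, hf, rfl⟩ : ∃ f ∈ F (q + δ), y' = y ^ n * f := ⟨_, hy', (mul_inv_cancel_left _ _).symm⟩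
  have hxy := hF.commutator_mem hx hy
  rw [← QuotientGroup.eq, ← QuotientGroup.mk'_apply, ← QuotientGroup.mk'_apply]
  simp only [map_pow, map_mul, map_commutatorElement, QuotientGroup.mk'_apply]
  rw [commutatorElement_mul_mul_of_commute, commutatorElement_pow_pow_of_commute]
  · exact hF.commute_mk (by linarith) hx hxy
  · exact hF.commute_mk (by linarith) hy hxy
  · exact hF.commute_mk (by linarith) he (mul_mem (pow_mem hy n) (hF.antitone (by linarith) hf))
  · exact hF.commute_mk (by linarith) hf (pow_mem hx m)

end IsStronglyCentralFiltration

namespace FC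

variable {k : ℕ}

theorem le_weight {w : Fin k → ℝ} {δ : ℝ} (hδ : 0 ≤ δ) (hw : ∀ i, δ ≤ w i) :
    ∀ c : FC k, δ ≤ weight w c
  | gen i _ => hw i
  | comm a b => by
    have := le_weight hδ hw a
    have := le_weight hδ hw b
    simp only [weight]
    linarith

theorem weight_mono {w w' : Fin k → ℝ} (h : w ≤ w') : ∀ c : FC k, weight w c ≤ weight w' c
  | gen i _ => h i
  | comm a b => add_le_add (weight_mono h a) (weight_mono h b)

theorem weight_lt_weight {w w' : Fin k → ℝ} (h : w ≤ w') {i : Fin k} (hi : w i < w' i) :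
    ∀ c : FC k, i ∈ letters c → weight w c < weight w' c
  | gen i' _, hc => by
    obtain rfl : i = i' := List.mem_singleton.1 hc
    exact hi
  | comm a b, hc => by
    rcases List.mem_append.1 hc with ha | hb
    · exact add_lt_add_of_lt_of_le (weight_lt_weight h hi a ha) (weight_mono h b)
    · exact add_lt_add_of_le_of_lt (weight_mono h a) (weight_lt_weight h hi b hb)

variable {G : Type*} [Group G] {F : ℝ → Subgroup G} {S : Fin k → G} {w : Fin k → ℝ}

theorem image_mem (hF : IsStronglyCentralFiltration F) (hS : ∀ i, S i ∈ F (w i)) :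
    ∀ c : FC k, image S c ∈ F (weight w c)
  | gen i true => hS i
  | gen i false => inv_mem (hS i)
  | comm a b => hF.commutator_mem (image_mem hF hS a) (image_mem hF hS b)

theorem image_pow_congr (hF : IsStronglyCentralFiltration F) (hS : ∀ i, S i ∈ F (w i)) {δ : ℝ}
    (hδ : 0 ≤ δ) (hδw : ∀ i, δ ≤ w i) (N : Fin k → ℕ) :
    ∀ c : FC k, (image S c ^ ((letters c).map N).prod)⁻¹ * image (fun i ↦ S i ^ N i) c ∈
      F (weight w c + δ)
  | gen i true => by simp [image, letters]
  | gen i false => by simp [image, letters, inv_pow]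
  | comm a b => by
    simpa only [letters, List.map_append, List.prod_append, image, weight, mul_comm] using
      hF.commutator_pow_congr hδ (le_weight hδ hδw a) (le_weight hδ hδw b)
        (image_mem hF hS a) (image_mem hF hS b)
        (image_pow_congr hF hS hδ hδw N a) (image_pow_congr hF hS hδ hδw N b)

theorem exists_pow_image_mem_of_pow_mem (hF : IsStronglyCentralFiltration F)
    (hS : ∀ i, S i ∈ F (w i)) (hw : ∀ i, 0 < w i) {c : FC k} {i : Fin k} (hi : i ∈ c.letters)
    {t : ℝ} (hit : w i < t) {u : ℕ} (hu : 0 < u) (hSu : S i ^ u ∈ F t) :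
    ∃ N, 0 < N ∧ ∃ x, c.weight w < x ∧ c.image S ^ N ∈ F x := by
  have : Nonempty (Fin k) := ⟨i⟩
  obtain ⟨j₀, hj₀⟩ := Finite.exists_min w
  set N := Function.update (1 : Fin k → ℕ) i u
  set w' := Function.update w i t
  have hN : ∀ j, 0 < N j := by
    intro j
    rcases eq_or_ne j i with rfl | hj
    · simpa [N] using hu
    · simp [N, hj]
  have hSN : ∀ j, S j ^ N j ∈ F (w' j) := by
    intro j
    rcases eq_or_ne j i with rfl | hj
    · simpa [N, w'] using hSu
    · simpa [N, w', hj] using hS j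
  have hww' : w ≤ w' := by
    intro j
    rcases eq_or_ne j i with rfl | hj
    · simpa [w'] using hit.le
    · simp [w', hj]
  have hcongr := c.image_pow_congr hF hS (hw j₀).le hj₀ N
  have hdeep := c.image_mem hF hSN
  have hlt : c.weight w < c.weight w' := c.weight_lt_weight hww' (by simpa [w'] using hit) hi
  refine ⟨(c.letters.map N).prod, List.prod_pos (by simpa using fun j _ ↦ hN j),
    min (c.weight w + w j₀) (c.weight w'), lt_min (lt_add_of_pos_right _ (hw j₀)) hlt, ?_⟩
  exact inv_mem_iff.1 ((Subgroup.mul_mem_cancel_right _ (hF.antitone (min_le_right _ _) hdeep)).1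
    (hF.antitone (min_le_left _ _) hcongr))

end FC

section WeightFiltration

open FC

variable {k : ℕ} {G : Type*} [Group G] {S : Fin k → G} {w : Fin k → ℝ} {wbar : ℕ → ℝ}

theorem weightSubgroup_antitone : Antitone (weightSubgroup S w) := fun _ _ hab ↦
  Subgroup.closure_mono fun _ ⟨c, hc, hg⟩ ↦ ⟨c, hab.trans hc, hg⟩

theorem generator_mem_weightSubgroup (i : Fin k) : S i ∈ weightSubgroup S w (w i) :=
  Subgroup.subset_closure ⟨gen i true, le_rfl, rfl⟩

theorem conj_mem_weightSubgroup (hw : ∀ i, 0 < w i) (i : Fin k) (b : Bool) {t : ℝ} {y : G}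
    (hy : y ∈ weightSubgroup S w t) :
    MulAut.conj (image S (gen i b)) y ∈ weightSubgroup S w t := by
  refine (Subgroup.closure_le ((weightSubgroup S w t).comap (MulAut.conj _).toMonoidHom)).2 ?_ hy
  rintro _ ⟨c, hc, rfl⟩
  rw [SetLike.mem_coe, Subgroup.mem_comap, MulEquiv.coe_toMonoidHom, conj_eq_commutatorElement_mul]
  have hwc : t ≤ weight w (comm (gen i b) c) := by
    simp only [weight]
    linarith [hw i]
  exact mul_mem (Subgroup.subset_closure ⟨_, hwc, rfl⟩) (Subgroup.subset_closure ⟨c, hc, rfl⟩)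

theorem weightSubgroup_normal (hS : Subgroup.closure (Set.range S) = ⊤) (hw : ∀ i, 0 < w i)
    (t : ℝ) : (weightSubgroup S w t).Normal := by
  rw [← Subgroup.normalizer_eq_top_iff, eq_top_iff, ← hS, Subgroup.closure_le]
  rintro _ ⟨i, rfl⟩ y
  refine ⟨conj_mem_weightSubgroup hw i true, fun hy ↦ ?_⟩
  simpa [image, mul_assoc] using conj_mem_weightSubgroup hw i false hy

theorem isStronglyCentralFiltration_weightSubgroup (hS : Subgroup.closure (Set.range S) = ⊤)
    (hw : ∀ i, 0 < w i) : IsStronglyCentralFiltration (weightSubgroup S w) where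
  antitone := weightSubgroup_antitone
  normal := weightSubgroup_normal hS hw
  commutator_le a b := by
    have := weightSubgroup_normal hS hw (a + b)
    refine Subgroup.commutator_closure_le ?_
    rintro _ ⟨c, hc, rfl⟩ _ ⟨d, hd, rfl⟩
    exact Subgroup.subset_closure ⟨comm c d, add_le_add hc hd, rfl⟩

theorem weightSubgroup_le_of_lt (hmono : StrictMono wbar)
    (hrange : Set.range wbar = { x | ∃ c : FC k, FC.weight w c = x }) {j : ℕ} {x : ℝ}
    (hx : wbar j < x) : weightSubgroup S w x ≤ weightSubgroup S w (wbar (j + 1)) := by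
  refine Subgroup.closure_mono ?_
  rintro _ ⟨c, hc, rfl⟩
  obtain ⟨j', hj'⟩ : c.weight w ∈ Set.range wbar := hrange ▸ ⟨c, rfl⟩
  have : j < j' := hmono.lt_iff_lt.1 (hj' ▸ hx.trans_le hc)
  exact ⟨c, hj' ▸ hmono.monotone this, rfl⟩

theorem jIndex_eq (hmono : StrictMono wbar) {s : G} {j : ℕ}
    (hs : s ∈ weightSubgroup S w (wbar j))
    (hdeep : ∀ t, wbar j < t → ∀ u, 0 < u → s ^ u ∉ weightSubgroup S w t) :
    jIndex S w wbar s = j := by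
  refine IsGreatest.csSup_eq ⟨⟨1, one_pos, by rwa [pow_one]⟩, ?_⟩
  rintro j' ⟨u, hu, hj'⟩
  by_contra! hlt
  exact hdeep _ (hmono hlt) u hu hj'

end WeightFiltration

theorem statement10_general {k : ℕ} {G : Type*} [Group G]
    (S : Fin k → G) (hS : Subgroup.closure (Set.range S) = ⊤)
    (w : Fin k → ℝ) (hw : ∀ i, 0 < w i)
    (wbar : ℕ → ℝ) (hmono : StrictMono wbar)
    (hrange : Set.range wbar = { x | ∃ c : FC k, FC.weight w c = x })
    (c : FC k) (j : ℕ) (hcw : FC.weight w c = wbar j)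
    (hfree : ∀ u : ℕ, 0 < u → (FC.image S c) ^ u ∉ weightSubgroup S w (wbar (j + 1))) :
    ∀ i ∈ FC.letters c, w i = wbar (jIndex S w wbar (S i)) := by
  intro i hi
  have hF := isStronglyCentralFiltration_weightSubgroup hS hw
  obtain ⟨j', hj'⟩ : w i ∈ Set.range wbar := hrange ▸ ⟨FC.gen i true, rfl⟩
  rw [jIndex_eq hmono (by rw [hj']; exact generator_mem_weightSubgroup i), hj']
  intro t ht u hu hSu
  obtain ⟨N, hN, x, hx, hmem⟩ :=
    FC.exists_pow_image_mem_of_pow_mem hF generator_mem_weightSubgroup hw hi (hj' ▸ ht) hu hSu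
  exact hfree N hN (weightSubgroup_le_of_lt hmono hrange (hcw ▸ hx) hmem)

/-- Let `G` be a nilpotent group generated by `S` with weight
system `𝔴` and filtration `G^𝔴_j` (thresholds given by the increasing
enumeration `wbar` of the weight values).  If `c` is a formal commutator of
weight `w̄_j` whose image projects to a non-torsion element of
`G^𝔴_j/G^𝔴_{j+1}` (i.e. no positive power of its image lies in `G^𝔴_{j+1}`),
then every letter `s_i` in the build-word of `c` satisfies
`w(s_i) = w̄_{j_𝔴(s_i)}`; that is, `c` only uses letters in the core of `(𝔴,S)`. -/
theorem statement10 {k : ℕ} {G : Type*} [Group G] [Group.IsNilpotent G]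
    (S : Fin k → G) (hS : Subgroup.closure (Set.range S) = ⊤)
    (w : Fin k → ℝ) (hw : ∀ i, 0 < w i)
    (wbar : ℕ → ℝ) (hmono : StrictMono wbar)
    (hrange : Set.range wbar = { x | ∃ c : FC k, FC.weight w c = x })
    (c : FC k) (j : ℕ) (hcw : FC.weight w c = wbar j)
    (hfree : ∀ u : ℕ, 0 < u → (FC.image S c) ^ u ∉ weightSubgroup S w (wbar (j + 1))) :
    ∀ i ∈ FC.letters c, w i = wbar (jIndex S w wbar (S i)) :=
  statement10_general S hS w hw wbar hmono hrange c j hcw hfree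
end

section
/- Let G be the discrete Heisenberg group with generating triple S = (X, Y, Z) (elementary matrices as usual) and parameters a = (α_1, α_2, α_3) with α_1, α_2 ∈ (0,2) and α_3 ∈ (0,2). Let 𝔴 assign weights w_i = 1/α_i. Then D(S,𝔴) = 1/α_1 + 1/α_2 + max{1/α_1 + 1/α_2, 1/α_3}, where D(S,𝔴) = Σ_j w̄_j · rank(G^𝔴_j/G^𝔴_{j+1}). -/
/-- The discrete Heisenberg group as triples of integers. -/
@[ext] structure Heis : Type where
  x : ℤ
  y : ℤ
  z : ℤ
  deriving DecidableEq

namespace Heis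

instance : Mul Heis := ⟨fun a b => ⟨a.x + b.x, a.y + b.y, a.z + b.z + a.x * b.y⟩⟩
instance : One Heis := ⟨⟨0, 0, 0⟩⟩
instance : Inv Heis := ⟨fun a => ⟨-a.x, -a.y, -a.z + a.x * a.y⟩⟩

lemma mul_def (a b : Heis) :
    a * b = ⟨a.x + b.x, a.y + b.y, a.z + b.z + a.x * b.y⟩ := rfl
lemma one_def : (1 : Heis) = ⟨0, 0, 0⟩ := rfl
lemma inv_def (a : Heis) : a⁻¹ = ⟨-a.x, -a.y, -a.z + a.x * a.y⟩ := rfl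

instance : Group Heis where
  mul_assoc a b c := by
    simp only [mul_def, mk.injEq]; refine ⟨by ring, by ring, by ring⟩
  one_mul a := by simp [mul_def, one_def]
  mul_one a := by simp [mul_def, one_def]
  inv_mul_cancel a := by
    simp only [mul_def, inv_def, one_def, mk.injEq]
    refine ⟨by ring, by ring, by ring⟩

def X : Heis := ⟨1, 0, 0⟩
def Y : Heis := ⟨0, 1, 0⟩
def Z : Heis := ⟨0, 0, 1⟩

end Heis

/-- The torsion-free rank of `A/B` for subgroups `B ≤ A`. -/
noncomputable def tfRank {G : Type*} [Group G] (A B : Subgroup G) : ℕ :=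
  sSup { n : ℕ | ∃ f : Fin n → G, (∀ i, f i ∈ A) ∧
    ∀ x : Fin n → ℤ, (List.ofFn (fun i => f i ^ x i)).prod ∈ B → ∀ i, x i = 0 }

/-- The set of weight values. -/
def weightVals {k : ℕ} (w : Fin k → ℝ) : Set ℝ :=
  Set.range (FC.weight w)

/-- The next weight value after `t`. -/
noncomputable def nextVal {k : ℕ} (w : Fin k → ℝ) (t : ℝ) : ℝ :=
  sInf { x ∈ weightVals w | t < x }

/-- `D(S,𝔴) = Σ_j w̄_j rank(G^𝔴_j/G^𝔴_{j+1})`. -/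
noncomputable def Dval {k : ℕ} {G : Type*} [Group G] (S : Fin k → G)
    (w : Fin k → ℝ) : ℝ :=
  ∑' t : (weightVals w), (t : ℝ) *
    (tfRank (weightSubgroup S w t) (weightSubgroup S w (nextVal w t)) : ℝ)

/-!
By the commutator formula `⁅a, b⁆ = (0, 0, a.x * b.y - a.y * b.x)`, the image of a formal
commutator of order at least two is central, and nontrivial only if it pairs a letter `X^±1` with
a letter `Y^±1`. So the level-`t` subgroup of the filtration is cut out by `x = 0` once
`t > w₁`, by `y = 0` once `t > w₂`, and is trivial once `t > max (w₁ + w₂) w₃`. Positive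
weights form a discrete set of values, so consecutive levels make sense, and the coordinate
homomorphisms `x`, `y` (and `z` on the centre) show that the quotient at level `t` is free abelian
of rank the number of values among `w₁`, `w₂`, `max (w₁ + w₂) w₃` equal to `t`.
-/

open scoped commutatorElement

section TorsionFreeRank

variable {G M : Type*} [Group G] [AddCommGroup M] {A B : Subgroup G}

lemma toAdd_map_ofFn_prod_zpow (φ : A →* Multiplicative M) {n : ℕ} (g : Fin n → A)
    (c : Fin n → ℤ) :
    (φ (List.ofFn fun i => g i ^ c i).prod).toAdd = ∑ i, c i • (φ (g i)).toAdd := by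
  simp [map_list_prod, List.map_ofFn, Function.comp_def, List.prod_ofFn, toAdd_prod]

lemma independent_mod_iff_linearIndependent (φ : A →* Multiplicative M)
    (hB : ∀ a : A, (a : G) ∈ B ↔ φ a = 1) {n : ℕ} (g : Fin n → A) :
    (∀ c : Fin n → ℤ, (List.ofFn fun i => (g i : G) ^ c i).prod ∈ B → ∀ i, c i = 0) ↔
      LinearIndependent ℤ fun i => (φ (g i)).toAdd := by
  have hprod (c : Fin n → ℤ) : (List.ofFn fun i => (g i : G) ^ c i).prod =
      ((List.ofFn fun i => g i ^ c i).prod : A) := by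
    simp [List.map_ofFn, Function.comp_def]
  rw [Fintype.linearIndependent_iff]
  refine forall_congr' fun c => ?_
  rw [hprod, hB, ← toAdd_map_ofFn_prod_zpow, toAdd_eq_zero]

theorem tfRank_eq_of_monoidHom [Module.Finite ℤ M] (φ : A →* Multiplicative M)
    (hB : ∀ a : A, (a : G) ∈ B ↔ φ a = 1) {r : ℕ} (hr : Module.finrank ℤ M = r)
    (f : Fin r → A) (hf : LinearIndependent ℤ fun i => (φ (f i)).toAdd) :
    tfRank A B = r := by
  refine IsGreatest.csSup_eq ⟨⟨fun i => f i, fun i => (f i).2,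
    (independent_mod_iff_linearIndependent φ hB f).2 hf⟩, ?_⟩
  rintro n ⟨g, hgA, hg⟩
  have := ((independent_mod_iff_linearIndependent φ hB fun i => ⟨g i, hgA i⟩).1 hg)
  simpa [hr] using this.fintype_card_le_finrank

theorem tfRank_self (A : Subgroup G) : tfRank A A = 0 :=
  tfRank_eq_of_monoidHom (M := Unit) 1 (fun a => by simp) Module.finrank_zero_of_subsingleton
    Fin.elim0 linearIndependent_empty_type

end TorsionFreeRank

namespace FC

variable {k : ℕ}

def count : FC k → Fin k → ℕ
  | gen i _ => Pi.single i 1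
  | comm a b => count a + count b

lemma weight_eq_sum_count (w : Fin k → ℝ) : ∀ c : FC k, weight w c = ∑ i, (count c i : ℝ) * w i
  | gen j _ => by simp [weight, count, Pi.single_apply]
  | comm a b => by
      simp only [weight, count, weight_eq_sum_count w a, weight_eq_sum_count w b, Pi.add_apply,
        Nat.cast_add, add_mul, Finset.sum_add_distrib]

lemma count_mul_le_weight {w : Fin k → ℝ} (hw : ∀ i, 0 ≤ w i) (c : FC k) (i : Fin k) :
    (count c i : ℝ) * w i ≤ weight w c := by
  rw [weight_eq_sum_count]
  exact Finset.single_le_sum (f := fun j => (count c j : ℝ) * w j)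
    (fun j _ => mul_nonneg (Nat.cast_nonneg _) (hw j)) (Finset.mem_univ i)

end FC

section WeightValues

variable {k : ℕ} {w : Fin k → ℝ}

/-- A weight `≤ b` contains at most `b / w i` letters `i`. -/
lemma finite_weightVals_inter_Iic (hw : ∀ i, 0 < w i) (b : ℝ) :
    (weightVals w ∩ Set.Iic b).Finite := by
  obtain ⟨N, hN⟩ := Finite.exists_le (fun i => ⌈b / w i⌉₊)
  refine ((Set.finite_Iic (fun _ => N : Fin k → ℕ)).image
    fun n => ∑ i, (n i : ℝ) * w i).subset ?_
  rintro _ ⟨⟨c, rfl⟩, hcb⟩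
  refine ⟨FC.count c, fun i => ?_, (FC.weight_eq_sum_count w c).symm⟩
  have : (FC.count c i : ℝ) ≤ b / w i := by
    rw [le_div_iff₀ (hw i)]
    exact (FC.count_mul_le_weight (fun j => (hw j).le) c i).trans hcb
  exact (Nat.cast_le.1 (this.trans (Nat.le_ceil _))).trans (hN i)

lemma add_mem_weightVals {x y : ℝ} (hx : x ∈ weightVals w) (hy : y ∈ weightVals w) :
    x + y ∈ weightVals w := by
  obtain ⟨a, rfl⟩ := hx
  obtain ⟨b, rfl⟩ := hy
  exact ⟨FC.comm a b, rfl⟩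

lemma exists_mem_weightVals_gt [NeZero k] (hw : ∀ i, 0 < w i) (t : ℝ) :
    ∃ x ∈ weightVals w, t < x := by
  have hmem (n : ℕ) : (n + 1) • w 0 ∈ weightVals w := by
    induction n with
    | zero => exact ⟨FC.gen 0 true, by simp [FC.weight]⟩
    | succ n ih => rw [succ_nsmul]; exact add_mem_weightVals ih ⟨FC.gen 0 true, rfl⟩
  obtain ⟨n, hn⟩ := exists_lt_nsmul (hw 0) t
  exact ⟨_, hmem n, hn.trans_le (nsmul_le_nsmul_left (hw 0).le n.le_succ)⟩

lemma isLeast_nextVal [NeZero k] (hw : ∀ i, 0 < w i) (t : ℝ) :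
    IsLeast {x ∈ weightVals w | t < x} (nextVal w t) := by
  obtain ⟨b, hbV, htb⟩ := exists_mem_weightVals_gt hw t
  obtain ⟨m, ⟨⟨hmV, htm⟩, hmb⟩, hmin⟩ := Set.exists_min_image
    ({x ∈ weightVals w | t < x} ∩ Set.Iic b) id
    ((finite_weightVals_inter_Iic hw b).subset fun x ⟨⟨hx, _⟩, hxb⟩ => ⟨hx, hxb⟩)
    ⟨b, ⟨hbV, htb⟩, Set.mem_Iic.2 le_rfl⟩
  have hleast : IsLeast {x ∈ weightVals w | t < x} m :=
    ⟨⟨hmV, htm⟩, fun x hx => (le_total x b).elim (fun hxb => hmin x ⟨hx, hxb⟩) hmb.trans⟩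
  rwa [nextVal, hleast.csInf_eq]

lemma lt_nextVal_iff [NeZero k] (hw : ∀ i, 0 < w i) {θ t : ℝ} (hθ : θ ∈ weightVals w) :
    θ < nextVal w t ↔ θ ≤ t := by
  have hnext := isLeast_nextVal hw t
  exact ⟨fun h => not_lt.1 fun htθ => (hnext.2 ⟨hθ, htθ⟩).not_gt h, fun h => h.trans_lt hnext.1.2⟩

end WeightValues

namespace Heis

lemma commutator_eq (a b : Heis) : ⁅a, b⁆ = ⟨0, 0, a.x * b.y - a.y * b.x⟩ := by
  simp only [commutatorElement_def, mul_def, inv_def, mk.injEq]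
  refine ⟨by ring, by ring, by ring⟩

lemma zpow_eq_of_y_eq_zero {g : Heis} (hg : g.y = 0) (n : ℤ) : g ^ n = ⟨n * g.x, 0, n * g.z⟩ := by
  induction n using Int.induction_on with
  | zero => simp [one_def]
  | succ n ih => rw [zpow_add_one, ih, mul_def]; ext <;> simp [hg] <;> ring
  | pred n ih => rw [zpow_sub_one, ih, inv_def, mul_def]; ext <;> simp [hg] <;> ring

lemma zpow_eq_of_x_eq_zero {g : Heis} (hg : g.x = 0) (n : ℤ) : g ^ n = ⟨0, n * g.y, n * g.z⟩ := by
  induction n using Int.induction_on with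
  | zero => simp [one_def]
  | succ n ih => rw [zpow_add_one, ih, mul_def]; ext <;> simp [hg] <;> ring
  | pred n ih => rw [zpow_sub_one, ih, inv_def, mul_def]; ext <;> simp [hg] <;> ring

lemma eq_X_zpow_mul_Y_zpow_mul_Z_zpow (g : Heis) :
    g = X ^ g.x * Y ^ g.y * Z ^ (g.z - g.x * g.y) := by
  rw [zpow_eq_of_y_eq_zero rfl, zpow_eq_of_x_eq_zero rfl, zpow_eq_of_x_eq_zero rfl]
  ext <;> simp [X, Y, Z, mul_def]

def xHom : Heis →* Multiplicative ℤ where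
  toFun g := .ofAdd g.x
  map_one' := rfl
  map_mul' _ _ := rfl

def yHom : Heis →* Multiplicative ℤ where
  toFun g := .ofAdd g.y
  map_one' := rfl
  map_mul' _ _ := rfl

def xyHom : Heis →* Multiplicative (ℤ × ℤ) where
  toFun g := .ofAdd (g.x, g.y)
  map_one' := rfl
  map_mul' _ _ := rfl

/-- On a subgroup where `x` vanishes the cocycle term `a.x * b.y` drops out, so `z` is additive. -/
def zHom (H : Subgroup Heis) (hH : ∀ g ∈ H, g.x = 0) : H →* Multiplicative ℤ where
  toFun g := .ofAdd (g : Heis).z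
  map_one' := rfl
  map_mul' a b := by
    simp only [Subgroup.coe_mul, mul_def, hH a a.2, zero_mul, add_zero]
    rfl

/-- `p`, `q`, `r` record whether `X`, `Y`, `Z` have dropped out of the filtration. -/
def coordSubgroup (p q r : Prop) : Subgroup Heis where
  carrier := {g | (p → g.x = 0) ∧ (q → g.y = 0) ∧ (r → g = 1)}
  mul_mem' := by
    rintro a b ⟨hax, hay, ha⟩ ⟨hbx, hby, hb⟩
    exact ⟨fun h => by simp [mul_def, hax h, hbx h], fun h => by simp [mul_def, hay h, hby h],
      fun h => by rw [ha h, hb h, one_mul]⟩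
  one_mem' := ⟨fun _ => rfl, fun _ => rfl, fun _ => rfl⟩
  inv_mem' := by
    rintro a ⟨hax, hay, ha⟩
    exact ⟨fun h => by simp [inv_def, hax h], fun h => by simp [inv_def, hay h],
      fun h => by rw [ha h, inv_one]⟩

lemma mem_coordSubgroup {p q r : Prop} {g : Heis} :
    g ∈ coordSubgroup p q r ↔ (p → g.x = 0) ∧ (q → g.y = 0) ∧ (r → g = 1) :=
  Iff.rfl

lemma tfRank_coordSubgroup_x (q : Prop) :
    tfRank (coordSubgroup False q False) (coordSubgroup True q False) = 1 := by
  refine tfRank_eq_of_monoidHom (xHom.comp (Subgroup.subtype _)) (fun a => ?_)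
    (Module.finrank_self ℤ) ![⟨X, by simp [mem_coordSubgroup, X]⟩]
    (linearIndependent_unique_iff.2 (by simp [xHom, X]))
  simpa [mem_coordSubgroup, xHom] using fun _ => (mem_coordSubgroup.1 a.2).2.1

lemma tfRank_coordSubgroup_y (p : Prop) :
    tfRank (coordSubgroup p False False) (coordSubgroup p True False) = 1 := by
  refine tfRank_eq_of_monoidHom (yHom.comp (Subgroup.subtype _)) (fun a => ?_)
    (Module.finrank_self ℤ) ![⟨Y, by simp [mem_coordSubgroup, Y]⟩]
    (linearIndependent_unique_iff.2 (by simp [yHom, Y]))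
  simpa [mem_coordSubgroup, yHom] using fun _ => (mem_coordSubgroup.1 a.2).1

lemma tfRank_coordSubgroup_xy :
    tfRank (coordSubgroup False False False) (coordSubgroup True True False) = 2 := by
  have hrank : Module.finrank ℤ (ℤ × ℤ) = 2 := by
    rw [Module.finrank_prod, Module.finrank_self]
  have hX : X ∈ coordSubgroup False False False := by simp [mem_coordSubgroup]
  have hY : Y ∈ coordSubgroup False False False := by simp [mem_coordSubgroup]
  refine tfRank_eq_of_monoidHom (xyHom.comp (Subgroup.subtype _)) (fun a => ?_) hrank
    ![⟨X, hX⟩, ⟨Y, hY⟩] ?_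
  · simp [mem_coordSubgroup, xyHom]
  · have himage : (fun i => (xyHom.comp (Subgroup.subtype _) (![⟨X, hX⟩, ⟨Y, hY⟩] i)).toAdd) =
        ![((1 : ℤ), (0 : ℤ)), (0, 1)] := by
      funext i; fin_cases i <;> rfl
    rw [himage, LinearIndependent.pair_iff]
    intro s t h
    simpa using h

lemma tfRank_coordSubgroup_z :
    tfRank (coordSubgroup True True False) (coordSubgroup True True True) = 1 := by
  refine tfRank_eq_of_monoidHom (zHom _ fun g hg => (mem_coordSubgroup.1 hg).1 trivial)
    (fun a => ?_) (Module.finrank_self ℤ) ![⟨Z, by simp [mem_coordSubgroup, Z]⟩]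
    (linearIndependent_unique_iff.2 (by simp [zHom, Z]))
  obtain ⟨hx, hy, -⟩ := mem_coordSubgroup.1 a.2
  simp [mem_coordSubgroup, zHom, Heis.ext_iff, one_def, hx trivial, hy trivial]

section Filtration

variable {w₁ w₂ w₃ : ℝ}

lemma weight_eq_of_image_x_ne_zero {c : FC 3} (h : (FC.image ![X, Y, Z] c).x ≠ 0) :
    FC.weight ![w₁, w₂, w₃] c = w₁ := by
  cases c with
  | gen i b => fin_cases i <;> cases b <;> simp_all [FC.image, FC.weight, X, Y, Z, inv_def]
  | comm a b => simp [FC.image, commutator_eq] at h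

lemma weight_eq_of_image_y_ne_zero {c : FC 3} (h : (FC.image ![X, Y, Z] c).y ≠ 0) :
    FC.weight ![w₁, w₂, w₃] c = w₂ := by
  cases c with
  | gen i b => fin_cases i <;> cases b <;> simp_all [FC.image, FC.weight, X, Y, Z, inv_def]
  | comm a b => simp [FC.image, commutator_eq] at h

lemma weight_le_of_image_ne_one (h₁ : 0 ≤ w₁) (h₂ : 0 ≤ w₂) {c : FC 3}
    (h : FC.image ![X, Y, Z] c ≠ 1) : FC.weight ![w₁, w₂, w₃] c ≤ max (w₁ + w₂) w₃ := by
  cases c with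
  | gen i b =>
    fin_cases i <;> simp [FC.weight, h₁, h₂]
  | comm a b =>
    have hz : (FC.image ![X, Y, Z] a).x * (FC.image ![X, Y, Z] b).y -
        (FC.image ![X, Y, Z] a).y * (FC.image ![X, Y, Z] b).x ≠ 0 := by
      simpa [FC.image, commutator_eq, one_def] using h
    have hw : FC.weight ![w₁, w₂, w₃] a + FC.weight ![w₁, w₂, w₃] b = w₁ + w₂ := by
      by_cases hxy : (FC.image ![X, Y, Z] a).x * (FC.image ![X, Y, Z] b).y = 0
      · obtain ⟨hay, hbx⟩ : _ ∧ _ := by simpa [hxy] using hz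
        rw [weight_eq_of_image_y_ne_zero hay, weight_eq_of_image_x_ne_zero hbx, add_comm]
      · obtain ⟨hax, hby⟩ := mul_ne_zero_iff.1 hxy
        rw [weight_eq_of_image_x_ne_zero hax, weight_eq_of_image_y_ne_zero hby]
    exact hw.trans_le (le_max_left _ _)

theorem weightSubgroup_eq_coordSubgroup (h₁ : 0 ≤ w₁) (h₂ : 0 ≤ w₂) (t : ℝ) :
    weightSubgroup ![X, Y, Z] ![w₁, w₂, w₃] t =
      coordSubgroup (w₁ < t) (w₂ < t) (max (w₁ + w₂) w₃ < t) := by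
  apply le_antisymm
  · refine (Subgroup.closure_le _).2 ?_
    rintro _ ⟨c, hc, rfl⟩
    refine ⟨fun ht => ?_, fun ht => ?_, fun ht => ?_⟩ <;> by_contra hne
    · linarith [weight_eq_of_image_x_ne_zero (w₁ := w₁) (w₂ := w₂) (w₃ := w₃) hne]
    · linarith [weight_eq_of_image_y_ne_zero (w₁ := w₁) (w₂ := w₂) (w₃ := w₃) hne]
    · linarith [weight_le_of_image_ne_one (w₃ := w₃) h₁ h₂ hne]
  · rintro g ⟨hx, hy, hg⟩
    set W := weightSubgroup ![X, Y, Z] ![w₁, w₂, w₃] t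
    have zpow_mem_W (a : Heis) (n : ℤ) (ha : n ≠ 0 → a ∈ W) : a ^ n ∈ W := by
      rcases eq_or_ne n 0 with rfl | hn
      exacts [zpow_zero a ▸ W.one_mem, zpow_mem (ha hn) n]
    have hZ : t ≤ max (w₁ + w₂) w₃ → Z ∈ W := by
      intro ht
      rcases le_max_iff.1 ht with ht | ht
      · exact Subgroup.subset_closure ⟨.comm (.gen 0 true) (.gen 1 true), ht, commutator_eq X Y⟩
      · exact Subgroup.subset_closure ⟨.gen 2 true, ht, rfl⟩
    rw [eq_X_zpow_mul_Y_zpow_mul_Z_zpow g]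
    refine mul_mem (mul_mem (zpow_mem_W _ _ fun h => ?_) (zpow_mem_W _ _ fun h => ?_))
      (zpow_mem_W _ _ fun h => hZ (not_lt.1 fun ht => h ?_))
    · exact Subgroup.subset_closure ⟨.gen 0 true, not_lt.1 (mt hx h), rfl⟩
    · exact Subgroup.subset_closure ⟨.gen 1 true, not_lt.1 (mt hy h), rfl⟩
    · simp [hg ht, one_def]

end Filtration

lemma tfRank_coordSubgroup_lt_le {w₁ w₂ wz : ℝ} (h₁ : w₁ < wz) (h₂ : w₂ < wz) (t : ℝ) :
    tfRank (coordSubgroup (w₁ < t) (w₂ < t) (wz < t))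
        (coordSubgroup (w₁ ≤ t) (w₂ ≤ t) (wz ≤ t)) =
      (if t = w₁ then 1 else 0) + (if t = w₂ then 1 else 0) + (if t = wz then 1 else 0) := by
  rcases eq_or_ne t wz with rfl | hz
  · simpa [h₁, h₂, h₁.le, h₂.le, h₁.ne', h₂.ne'] using tfRank_coordSubgroup_z
  rcases eq_or_ne t w₁ with rfl | ht₁ <;> rcases eq_or_ne t w₂ with rfl | ht₂
  · simpa [h₁, h₁.not_ge, h₁.not_gt, hz] using tfRank_coordSubgroup_xy
  · simpa [h₁, h₁.not_ge, h₁.not_gt, hz, ht₂, (Ne.symm ht₂).le_iff_lt]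
      using tfRank_coordSubgroup_x (w₂ < t)
  · simpa [h₂, h₂.not_ge, h₂.not_gt, hz, ht₁, (Ne.symm ht₁).le_iff_lt]
      using tfRank_coordSubgroup_y (w₁ < t)
  · simpa [ht₁, ht₂, hz, (Ne.symm ht₁).le_iff_lt, (Ne.symm ht₂).le_iff_lt, (Ne.symm hz).le_iff_lt]
      using tfRank_self (coordSubgroup (w₁ < t) (w₂ < t) (wz < t))

theorem Dval_eq {w₁ w₂ w₃ : ℝ} (h₁ : 0 < w₁) (h₂ : 0 < w₂) (h₃ : 0 < w₃) :
    Dval ![X, Y, Z] ![w₁, w₂, w₃] = w₁ + w₂ + max (w₁ + w₂) w₃ := by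
  have hw : ∀ i, 0 < ![w₁, w₂, w₃] i := by
    intro i; fin_cases i <;> assumption
  have hVz : max (w₁ + w₂) w₃ ∈ weightVals ![w₁, w₂, w₃] := by
    rcases max_choice (w₁ + w₂) w₃ with h | h <;> rw [h]
    exacts [⟨.comm (.gen 0 true) (.gen 1 true), rfl⟩, ⟨.gen 2 true, rfl⟩]
  set wz := max (w₁ + w₂) w₃
  set V := weightVals ![w₁, w₂, w₃]
  have hV₁ : w₁ ∈ V := ⟨.gen 0 true, rfl⟩
  have hV₂ : w₂ ∈ V := ⟨.gen 1 true, rfl⟩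
  have hsummand (t : V) :
      (t : ℝ) * tfRank (weightSubgroup ![X, Y, Z] ![w₁, w₂, w₃] t)
        (weightSubgroup ![X, Y, Z] ![w₁, w₂, w₃] (nextVal ![w₁, w₂, w₃] t)) =
      (if t = ⟨w₁, hV₁⟩ then w₁ else 0) + (if t = ⟨w₂, hV₂⟩ then w₂ else 0) +
        (if t = ⟨wz, hVz⟩ then wz else 0) := by
    have hz₁ : w₁ < wz := lt_max_of_lt_left (lt_add_of_pos_right w₁ h₂)
    have hz₂ : w₂ < wz := lt_max_of_lt_left (lt_add_of_pos_left w₂ h₁)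
    rw [weightSubgroup_eq_coordSubgroup h₁.le h₂.le, weightSubgroup_eq_coordSubgroup h₁.le h₂.le,
      lt_nextVal_iff hw hV₁, lt_nextVal_iff hw hV₂, lt_nextVal_iff hw hVz,
      tfRank_coordSubgroup_lt_le hz₁ hz₂]
    simp only [Subtype.ext_iff]
    split_ifs <;> simp_all [mul_two]
  unfold Dval
  rw [tsum_congr hsummand]
  exact (((hasSum_ite_eq _ _).add (hasSum_ite_eq _ _)).add (hasSum_ite_eq _ _)).tsum_eq

end Heis

open Heis in
theorem statement18_general (α₁ α₂ α₃ : ℝ)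
    (h₁ : 0 < α₁) (h₂ : 0 < α₂) (h₃ : 0 < α₃) :
    Dval (![X, Y, Z] : Fin 3 → Heis) ![1/α₁, 1/α₂, 1/α₃] =
      1/α₁ + 1/α₂ + max (1/α₁ + 1/α₂) (1/α₃) :=
  Dval_eq (by positivity) (by positivity) (by positivity)

open Heis in
/-- The discrete Heisenberg group with generating triple
`S = (X, Y, Z)`, parameters `α₁, α₂, α₃ ∈ (0,2)` and weights `w_i = 1/α_i`:
`D(S,𝔴) = 1/α₁ + 1/α₂ + max{1/α₁ + 1/α₂, 1/α₃}`. -/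
theorem statement18 (α₁ α₂ α₃ : ℝ)
    (h₁ : 0 < α₁) (h₁' : α₁ < 2) (h₂ : 0 < α₂) (h₂' : α₂ < 2)
    (h₃ : 0 < α₃) (h₃' : α₃ < 2) :
    Dval (![X, Y, Z] : Fin 3 → Heis) ![1/α₁, 1/α₂, 1/α₃] =
      1/α₁ + 1/α₂ + max (1/α₁ + 1/α₂) (1/α₃) :=
  statement18_general α₁ α₂ α₃ h₁ h₂ h₃
end
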